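/- arXiv:1910.06442 — 2 statements merged into one kernel-verified Lean document; each statement's English description precedes it below -/
import Mathlib

section
/- Let G be a biconnected loopless multigraph with at least two vertices whose Jacobian Jac(G) has exponent 3. Then either G is the banana graph B₃ (exactly two vertices joined by exactly three edges, i.e., w(u,v) = 3 for the two distinct vertices), or G is the triangle C₃ (exactly three vertices with w(u,v) = 1 for every pair of distinct vertices u, v). -/
open Finset

variable {V : Type*}

/-- Degree of a vertex in the loopless multigraph with edge-multiplicity function `w`. -/
def mgDeg [Fintype V] (w : V → V → ℕ) (v : V) : ℕ := ∑ u, w v u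

/-- The Laplacian of the multigraph, as an additive homomorphism on `V → ℤ`. -/
def mgLap [Fintype V] (w : V → V → ℕ) : (V → ℤ) →+ (V → ℤ) :=
  AddMonoidHom.mk' (fun f v => (mgDeg w v : ℤ) * f v - ∑ u, (w v u : ℤ) * f u)
    (by
      intro f g
      funext v
      simp [mul_add, Finset.sum_add_distrib]
      ring)

/-- The group `Div⁰(G)` of divisors of degree zero. -/
def mgDiv0 (V : Type*) [Fintype V] : AddSubgroup (V → ℤ) :=
  AddMonoidHom.ker
    (AddMonoidHom.mk' (fun D : V → ℤ => ∑ v, D v)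
      (by intro a b; simp [Finset.sum_add_distrib]))

/-- The group `Prin(G)` of principal divisors, the image of the Laplacian. -/
def mgPrin [Fintype V] (w : V → V → ℕ) : AddSubgroup (V → ℤ) := (mgLap w).range

/-- The Jacobian `Jac(G) = Div⁰(G)/Prin(G)`. -/
abbrev mgJac (V : Type*) [Fintype V] (w : V → V → ℕ) : Type _ :=
  mgDiv0 V ⧸ ((mgPrin w).addSubgroupOf (mgDiv0 V))

/-- The underlying simple graph: `u` adjacent to `v` iff `u ≠ v` and `w u v > 0`. -/
def mgUnderlying (w : V → V → ℕ) : SimpleGraph V :=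
  SimpleGraph.fromRel (fun u v => 0 < w u v)

/-- `G` is biconnected: connected, and removing any vertex leaves a connected graph. -/
def mgBiconnected [Fintype V] (w : V → V → ℕ) : Prop :=
  (mgUnderlying w).Connected ∧
    ∀ x : V, ((mgUnderlying w).induce ({x}ᶜ : Set V)).Connected

set_option linter.unusedSectionVars false

section Aux
variable [Fintype V] [DecidableEq V]

lemma mgLap_apply (w : V → V → ℕ) (f : V → ℤ) (x : V) :
    mgLap w f x = (mgDeg w x : ℤ) * f x - ∑ u, (w x u : ℤ) * f u := rfl

lemma mgLap_eq_sum (w : V → V → ℕ) (f : V → ℤ) (x : V) :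
    mgLap w f x = ∑ y, (w x y : ℤ) * (f x - f y) := by
  rw [mgLap_apply, mgDeg]
  push_cast
  rw [Finset.sum_mul]
  rw [← Finset.sum_sub_distrib]
  congr 1; funext y; ring

lemma exists_pot (w : V → V → ℕ) (h3 : ∀ a : mgJac V w, 3 • a = 0) (u v : V) :
    ∃ f : V → ℤ, ∀ x : V, (∑ y, (w x y : ℤ) * (f x - f y))
      = 3 * ((if x = u then (1:ℤ) else 0) - (if x = v then 1 else 0)) := by
  set D : V → ℤ := fun x => (if x = u then (1:ℤ) else 0) - (if x = v then 1 else 0) with hD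
  have hD0 : D ∈ mgDiv0 V := by
    simp only [mgDiv0, AddMonoidHom.mem_ker, AddMonoidHom.mk'_apply, hD]
    rw [Finset.sum_sub_distrib]
    simp
  have h := h3 (QuotientAddGroup.mk (⟨D, hD0⟩ : mgDiv0 V))
  rw [← QuotientAddGroup.mk_nsmul] at h
  rw [QuotientAddGroup.eq_zero_iff] at h
  rw [AddSubgroup.mem_addSubgroupOf] at h
  obtain ⟨g, hg⟩ := h
  refine ⟨g, fun x => ?_⟩
  have := congrFun hg x
  rw [mgLap_eq_sum] at this
  rw [this]
  show (3 • (⟨D, hD0⟩ : mgDiv0 V) : V → ℤ) x = _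
  simp [hD]
lemma walk_closure {α : Type*} {G : SimpleGraph α} {A : Set α}
    (hcl : ∀ a ∈ A, ∀ b, G.Adj a b → b ∈ A) :
    ∀ {a x : α}, G.Walk a x → a ∈ A → x ∈ A := by
  intro a x p
  induction p with
  | nil => exact id
  | cons h q ih => intro ha; exact ih (hcl _ ha _ h)

lemma closure_all (w : V → V → ℕ) (hconn : (mgUnderlying w).Connected) {A : Set V}
    (hcl : ∀ a ∈ A, ∀ b, (mgUnderlying w).Adj a b → b ∈ A) {a : V} (ha : a ∈ A)
    (x : V) : x ∈ A := by
  obtain ⟨p⟩ := hconn.preconnected a x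
  exact walk_closure hcl p ha

lemma closure_avoid (w : V → V → ℕ) (x0 : V)
    (hconn : ((mgUnderlying w).induce ({x0}ᶜ : Set V)).Connected)
    {A : Set V}
    (hcl : ∀ a ∈ A, a ≠ x0 → ∀ b, b ≠ x0 → (mgUnderlying w).Adj a b → b ∈ A)
    {a b : V} (ha : a ∈ A) (hax : a ≠ x0) (hbx : b ≠ x0) : b ∈ A := by
  have ha' : a ∈ ({x0}ᶜ : Set V) := by simpa using hax
  have hb' : b ∈ ({x0}ᶜ : Set V) := by simpa using hbx
  obtain ⟨p⟩ := hconn.preconnected ⟨a, ha'⟩ ⟨b, hb'⟩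
  have key : ∀ z ∈ {z : ({x0}ᶜ : Set V) | (z : V) ∈ A}, ∀ z',
      ((mgUnderlying w).induce ({x0}ᶜ : Set V)).Adj z z' →
      z' ∈ {z : ({x0}ᶜ : Set V) | (z : V) ∈ A} := by
    rintro ⟨p, hp⟩ hpA ⟨q, hq⟩ hadj
    have hp0 : p ≠ x0 := by simpa using hp
    have hq0 : q ≠ x0 := by simpa using hq
    exact hcl p hpA hp0 q hq0 hadj
  exact walk_closure key p ha

lemma adj_pos (w : V → V → ℕ) (hsym : ∀ u v, w u v = w v u) {a b : V}
    (h : (mgUnderlying w).Adj a b) : a ≠ b ∧ 0 < w a b := by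
  rw [mgUnderlying, SimpleGraph.fromRel_adj] at h
  refine ⟨h.1, ?_⟩
  rcases h.2 with h2 | h2
  · exact h2
  · rw [hsym]; exact h2

lemma pos_adj (w : V → V → ℕ) {a b : V} (hab : a ≠ b) (h : 0 < w a b) :
    (mgUnderlying w).Adj a b := by
  rw [mgUnderlying, SimpleGraph.fromRel_adj]; exact ⟨hab, Or.inl h⟩

lemma max_at (w : V → V → ℕ) (hsym : ∀ u v, w u v = w v u)
    (hbic : mgBiconnected w) {u v : V} (huv : u ≠ v) {f : V → ℤ}
    (hf : ∀ x : V, (∑ y, (w x y : ℤ) * (f x - f y))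
      = 3 * ((if x = u then (1:ℤ) else 0) - (if x = v then 1 else 0))) :
    (∀ y, f y ≤ f u) ∧ ∀ x, x ≠ u → f x < f u := by
  have hmax : ∀ y, f y ≤ f u := by
    by_contra hcon
    push_neg at hcon
    obtain ⟨y0, hy0⟩ := hcon
    obtain ⟨m0, -, hm0⟩ := Finset.exists_max_image (univ : Finset V) f ⟨u, mem_univ u⟩
    set A : Set V := {x | ∀ y, f y ≤ f x} with hA
    have hm0A : m0 ∈ A := fun y => hm0 y (mem_univ y)
    have hcl : ∀ a ∈ A, ∀ b, (mgUnderlying w).Adj a b → b ∈ A := by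
      intro a haA b hadj
      obtain ⟨hne, hpos⟩ := adj_pos w hsym hadj
      have hau : a ≠ u := by rintro rfl; exact absurd (haA y0) (not_le.mpr hy0)
      have hL : (∑ y, (w a y : ℤ) * (f a - f y)) ≤ 0 := by
        rw [hf a, if_neg hau]
        split <;> norm_num
      have hterms : ∀ y ∈ (univ : Finset V), 0 ≤ (w a y : ℤ) * (f a - f y) := by
        intro y _
        exact mul_nonneg (by positivity) (by have := haA y; linarith)
      have hzero := (Finset.sum_eq_zero_iff_of_nonneg hterms).mp
        (le_antisymm hL (Finset.sum_nonneg hterms))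
      have hb := hzero b (mem_univ b)
      have hfb : f b = f a := by
        rcases mul_eq_zero.mp hb with h' | h'
        · exact absurd h' (by exact_mod_cast hpos.ne')
        · linarith
      intro y; rw [hfb]; exact haA y
    have : u ∈ A := closure_all w hbic.1 hcl hm0A u
    exact absurd (this y0) (not_le.mpr hy0)
  refine ⟨hmax, fun s hs => ?_⟩
  rcases lt_or_eq_of_le (hmax s) with h | h
  · exact h
  · exfalso
    set B : Set V := {z | f z = f u} with hB
    have hsB : s ∈ B := h
    have hcl : ∀ a ∈ B, a ≠ u → ∀ b, b ≠ u → (mgUnderlying w).Adj a b → b ∈ B := by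
      intro a haB hau b hbu hadj
      obtain ⟨hne, hpos⟩ := adj_pos w hsym hadj
      have hL : (∑ y, (w a y : ℤ) * (f a - f y)) ≤ 0 := by
        rw [hf a, if_neg hau]
        split <;> norm_num
      have hterms : ∀ y ∈ (univ : Finset V), 0 ≤ (w a y : ℤ) * (f a - f y) := by
        intro y _
        refine mul_nonneg (by positivity) ?_
        have := hmax y
        have haU : f a = f u := haB
        linarith
      have hzero := (Finset.sum_eq_zero_iff_of_nonneg hterms).mp
        (le_antisymm hL (Finset.sum_nonneg hterms))
      have hb := hzero b (mem_univ b)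
      have hfb : f b = f a := by
        rcases mul_eq_zero.mp hb with h' | h'
        · exact absurd h' (by exact_mod_cast hpos.ne')
        · linarith
      show f b = f u
      rw [hfb]; exact haB
    have hall : ∀ z, z ≠ u → z ∈ B := fun z hz =>
      closure_avoid w u (hbic.2 u) hcl hsB hs hz
    have hconst : ∀ y, f y = f u := by
      intro y
      by_cases hy : y = u
      · rw [hy]
      · exact hall y hy
    have hzero : (∑ y, (w u y : ℤ) * (f u - f y)) = 0 :=
      Finset.sum_eq_zero (fun y _ => by rw [hconst y]; ring)
    rw [hf u, if_pos rfl, if_neg huv] at hzero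
    norm_num at hzero
lemma neg_pot (w : V → V → ℕ) {u v : V} {f : V → ℤ}
    (hf : ∀ x : V, (∑ y, (w x y : ℤ) * (f x - f y))
      = 3 * ((if x = u then (1:ℤ) else 0) - (if x = v then 1 else 0))) :
    ∀ x : V, (∑ y, (w x y : ℤ) * ((-f) x - (-f) y))
      = 3 * ((if x = v then (1:ℤ) else 0) - (if x = u then 1 else 0)) := by
  intro x
  have h1 : (∑ y, (w x y : ℤ) * ((-f) x - (-f) y))
      = -(∑ y, (w x y : ℤ) * (f x - f y)) := by
    rw [← Finset.sum_neg_distrib]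
    refine Finset.sum_congr rfl (fun y _ => ?_)
    simp; ring
  rw [h1, hf x]; ring

lemma struct_at (w : V → V → ℕ) (hsym : ∀ u v, w u v = w v u) (hloop : ∀ v, w v v = 0)
    (hbic : mgBiconnected w) {u v p : V} (huv : u ≠ v) (hpos : 0 < w u v)
    (hpu : p ≠ u) (hpv : p ≠ v) {f : V → ℤ}
    (hf : ∀ x : V, (∑ y, (w x y : ℤ) * (f x - f y))
      = 3 * ((if x = u then (1:ℤ) else 0) - (if x = v then 1 else 0))) :
    w u v = 1 ∧ f u - f v = 2 ∧
      ∃ x : V, x ≠ u ∧ x ≠ v ∧ w u x = 1 ∧ f x = f u - 1 ∧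
        ∀ q : V, 0 < w u q → q = v ∨ q = x := by
  obtain ⟨hmax, hmaxs⟩ := max_at w hsym hbic huv hf
  obtain ⟨hmin', hmins'⟩ := max_at w hsym hbic huv.symm (neg_pot w hf)
  have hmin : ∀ y, f v ≤ f y := by intro y; have := hmin' y; simpa using this
  have hmins : ∀ x, x ≠ v → f v < f x := by
    intro x hx; have := hmins' x hx; simp at this; linarith
  have hLu : (∑ y, (w u y : ℤ) * (f u - f y)) = 3 := by
    rw [hf u, if_pos rfl, if_neg huv]; norm_num
  rw [← Finset.add_sum_erase _ _ (mem_univ v)] at hLu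
  set c : ℤ := (w u v : ℤ) with hc
  set d : ℤ := f u - f v with hd
  set R : ℤ := ∑ y ∈ univ.erase v, (w u y : ℤ) * (f u - f y) with hR
  have hc1 : 1 ≤ c := by
    have : (0:ℤ) < c := by rw [hc]; exact_mod_cast hpos
    omega
  have hd1 : 1 ≤ d := by have := hmins u huv; omega
  have htermsnn : ∀ y ∈ univ.erase v, 0 ≤ (w u y : ℤ) * (f u - f y) := by
    intro y _
    exact mul_nonneg (by positivity) (by have := hmax y; linarith)
  have hR0 : 0 ≤ R := Finset.sum_nonneg htermsnn
  -- R ≥ 1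
  have hR1 : 1 ≤ R := by
    rcases eq_or_lt_of_le hR0 with hReq | hRlt
    · exfalso
      have hz := (Finset.sum_eq_zero_iff_of_nonneg htermsnn).mp hReq.symm
      have hnb : ∀ q, q ≠ v → w u q = 0 := by
        intro q hq
        by_contra hwq
        have h0 := hz q (mem_erase.mpr ⟨hq, mem_univ q⟩)
        rcases mul_eq_zero.mp h0 with h' | h'
        · exact hwq (by exact_mod_cast h')
        · have hqu : q = u := by
            by_contra hqu
            have := hmaxs q hqu; linarith
          rw [hqu, hloop] at hwq; exact hwq rfl
      have hpmem : p ∈ ({u} : Set V) := by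
        refine closure_avoid w v (hbic.2 v) ?_ (Set.mem_singleton u) huv hpv
        intro a ha hav b hbv hadj
        have hau : a = u := ha
        subst hau
        obtain ⟨hne, hposb⟩ := adj_pos w hsym hadj
        have := hnb b hbv
        omega
      exact hpu hpmem
    · omega
  -- d ≥ 2
  have hd2 : 2 ≤ d := by
    by_contra hdc
    have hdeq : d = 1 := by omega
    obtain ⟨y0, hy0mem, hy0pos⟩ :=
      Finset.exists_lt_of_sum_lt (f := fun _ => (0:ℤ))
        (g := fun y => (w u y : ℤ) * (f u - f y))
        (by rw [Finset.sum_const_zero, ← hR]; omega)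
    have hy0v : y0 ≠ v := (mem_erase.mp hy0mem).1
    have hfy0 : f y0 < f u := by
      by_contra hcon
      push_neg at hcon
      have : f u - f y0 ≤ 0 := by linarith
      nlinarith [hy0pos, (by positivity : (0:ℤ) ≤ (w u y0 : ℤ))]
    have := hmins y0 hy0v
    omega
  -- conclude c = 1, d = 2, R = 1
  have hcdle : c * d ≤ 2 := by linarith
  have hdle : d ≤ 2 := by nlinarith
  have hdeq : d = 2 := le_antisymm hdle hd2
  have hceq : c = 1 := by nlinarith
  have hReq : R = 1 := by rw [hdeq, hceq] at hLu; linarith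
  refine ⟨by rw [hc] at hceq; exact_mod_cast hceq, hdeq, ?_⟩
  -- structure of R = 1
  obtain ⟨x, hxmem, hxpos⟩ :=
    Finset.exists_lt_of_sum_lt (f := fun _ => (0:ℤ))
      (g := fun y => (w u y : ℤ) * (f u - f y))
      (by rw [Finset.sum_const_zero, ← hR]; omega)
  have hxv : x ≠ v := (mem_erase.mp hxmem).1
  have htx1 : (w u x : ℤ) * (f u - f x) = 1 := by
    have hle := Finset.single_le_sum htermsnn hxmem
    rw [← hR] at hle
    linarith
  have hwnn : (0:ℤ) ≤ (w u x : ℤ) := by positivity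
  obtain ⟨hwx1, hfx'⟩ : (w u x : ℤ) = 1 ∧ f u - f x = 1 := by
    rcases Int.mul_eq_one_iff_eq_one_or_neg_one.mp htx1 with h | h
    · exact h
    · exfalso; rw [h.1] at hwnn; norm_num at hwnn
  have hfx : f x = f u - 1 := by linarith
  have hxu : x ≠ u := by intro h; rw [h] at hfx; omega
  have hrest : ∑ y ∈ (univ.erase v).erase x, (w u y : ℤ) * (f u - f y) = 0 := by
    have hsplit := Finset.add_sum_erase (univ.erase v) (fun y => (w u y : ℤ) * (f u - f y)) hxmem
    rw [← hR] at hsplit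
    beta_reduce at hsplit
    linarith [htx1, hReq, hsplit]
  have hz := (Finset.sum_eq_zero_iff_of_nonneg
    (fun y hy => htermsnn y (Finset.mem_of_mem_erase hy))).mp hrest
  refine ⟨x, hxu, hxv, by exact_mod_cast hwx1, hfx, ?_⟩
  intro q hq
  by_contra hcon
  push_neg at hcon
  obtain ⟨hqv, hqx⟩ := hcon
  have hqmem : q ∈ (univ.erase v).erase x :=
    mem_erase.mpr ⟨hqx, mem_erase.mpr ⟨hqv, mem_univ q⟩⟩
  have h0 := hz q hqmem
  rcases mul_eq_zero.mp h0 with h' | h'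
  · have : w u q = 0 := by exact_mod_cast h'
    omega
  · have hqu : q = u := by
      by_contra hqu
      have := hmaxs q hqu; linarith
    rw [hqu, hloop] at hq; exact absurd hq (lt_irrefl 0)
end Aux

/-- a biconnected loopless multigraph on at least two vertices whose Jacobian has
exponent 3 is either the banana graph B₃ (two vertices, three parallel edges) or the
triangle C₃ (three vertices, single edges between each pair). -/
theorem stmt4 (V : Type*) [Fintype V] [DecidableEq V] [Nontrivial V] (w : V → V → ℕ)
    (hsym : ∀ u v, w u v = w v u) (hloop : ∀ v, w v v = 0)
    (hbic : mgBiconnected w)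
    (hexp : AddMonoid.exponent (mgJac V w) = 3) :
    (∃ u v : V, u ≠ v ∧ (∀ x : V, x = u ∨ x = v) ∧ w u v = 3) ∨
    (∃ a b c : V, a ≠ b ∧ b ≠ c ∧ a ≠ c ∧ (∀ x : V, x = a ∨ x = b ∨ x = c) ∧
      ∀ u v : V, u ≠ v → w u v = 1) := by
  classical
  have h3 : ∀ a : mgJac V w, 3 • a = 0 := by
    intro a; rw [← hexp]; exact AddMonoid.exponent_nsmul_eq_zero a
  obtain ⟨a0, b0, hab⟩ := exists_pair_ne V
  obtain ⟨p0⟩ := hbic.1.preconnected a0 b0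
  obtain ⟨u, v, huv, hpos⟩ : ∃ u v : V, u ≠ v ∧ 0 < w u v := by
    cases p0 with
    | nil => exact absurd rfl hab
    | cons h q =>
      obtain ⟨h1, h2⟩ := adj_pos w hsym h
      exact ⟨_, _, h1, h2⟩
  obtain ⟨f, hf⟩ := exists_pot w h3 u v
  by_cases htwo : ∀ z : V, z = u ∨ z = v
  · -- banana case
    left
    have huniv : (univ : Finset V) = {u, v} := by
      ext z; simpa using htwo z
    have hsum_pair : ∀ {M : Type} [AddCommMonoid M] (g : V → M),
        (∑ t : V, g t) = g u + g v := by
      intro M _ g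
      rw [show (univ : Finset V) = {u, v} from huniv, Finset.sum_pair huv]
    have hLu := hf u
    rw [hsum_pair] at hLu
    rw [if_pos rfl, if_neg huv] at hLu
    rw [hloop u] at hLu
    norm_num at hLu
    -- hLu : (w u v : ℤ) * (f u - f v) = 3
    have hdvd : (w u v : ℤ) ∣ 3 := ⟨f u - f v, hLu.symm⟩
    have hdvd' : w u v ∣ 3 := by exact_mod_cast hdvd
    rcases (Nat.prime_three.eq_one_or_self_of_dvd _ hdvd') with h1 | h3'
    · -- w u v = 1 : Jacobian trivial, contradiction
      exfalso
      have hsub : ∀ a : mgJac V w, a = 0 := by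
        intro a
        refine QuotientAddGroup.induction_on a ?_
        intro z
        rw [QuotientAddGroup.eq_zero_iff, AddSubgroup.mem_addSubgroupOf]
        have hzsum : (z : V → ℤ) u + (z : V → ℤ) v = 0 := by
          have hz := z.2
          simp only [mgDiv0, AddMonoidHom.mem_ker, AddMonoidHom.mk'_apply] at hz
          rw [← hsum_pair (fun t => (z : V → ℤ) t)]
          exact hz
        refine ⟨fun t => if t = u then (z : V → ℤ) u else 0, ?_⟩
        funext t
        have hdegu : mgDeg w u = 1 := by
          rw [mgDeg, hsum_pair, hloop u, h1]
        have hdegv : mgDeg w v = 1 := by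
          rw [mgDeg, hsum_pair, hloop v, ← hsym u v, h1]
        have hvu1 : w v u = 1 := by rw [← hsym u v]; exact h1
        rcases htwo t with ht | ht
        · subst ht
          rw [mgLap_apply, hdegu, hsum_pair]
          simp [hloop t, Ne.symm huv]
        · subst ht
          rw [mgLap_apply, hdegv, hsum_pair]
          simp [hloop t, Ne.symm huv, hvu1]
          linarith [hzsum]
      have hdvd1 : AddMonoid.exponent (mgJac V w) ∣ 1 :=
        AddMonoid.exponent_dvd_of_forall_nsmul_eq_zero (fun a => by
          rw [one_nsmul]; exact hsub a)
      rw [hexp] at hdvd1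
      norm_num at hdvd1
    · exact ⟨u, v, huv, htwo, h3'⟩
  · -- triangle case
    push_neg at htwo
    obtain ⟨p, hpu, hpv⟩ := htwo
    right
    obtain ⟨hwuv, hd, x, hxu, hxv, hwux, hfx, hnbu⟩ :=
      struct_at w hsym hloop hbic huv hpos hpu hpv hf
    have hf' := neg_pot w hf
    have hvpos : 0 < w v u := by rw [← hsym]; exact hpos
    obtain ⟨hwvu, hd', y, hyv, hyu, hwvy, hfy, hnbv⟩ :=
      struct_at w hsym hloop hbic huv.symm hvpos hpv hpu hf'
    obtain ⟨hmax, hmaxs⟩ := max_at w hsym hbic huv hf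
    obtain ⟨hmin', hmins'⟩ := max_at w hsym hbic huv.symm hf'
    have hmins : ∀ z, z ≠ v → f v < f z := by
      intro z hz; have := hmins' z hz; simp at this; linarith
    -- harmonic at x
    have hLx := hf x
    rw [if_neg hxu, if_neg hxv] at hLx
    norm_num at hLx
    rw [← Finset.add_sum_erase _ _ (mem_univ u)] at hLx
    have hwxu : (w x u : ℤ) = 1 := by rw [hsym x u]; exact_mod_cast hwux
    have hterm : (w x u : ℤ) * (f x - f u) = -1 := by rw [hwxu, hfx]; ring
    have hrest : ∑ z ∈ univ.erase u, (w x z : ℤ) * (f x - f z) = 1 := by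
      linarith [hLx, hterm]
    obtain ⟨z0, hz0mem, hz0pos⟩ :=
      Finset.exists_lt_of_sum_lt (f := fun _ => (0:ℤ))
        (g := fun z => (w x z : ℤ) * (f x - f z))
        (by rw [Finset.sum_const_zero, hrest]; norm_num)
    have hz0u : z0 ≠ u := (mem_erase.mp hz0mem).1
    have hfz0lt : f z0 < f x := by
      by_contra hcon
      push_neg at hcon
      nlinarith [hz0pos, (by positivity : (0:ℤ) ≤ (w x z0 : ℤ))]
    have hz0v : z0 = v := by
      by_contra hne
      have h1 := hmins z0 hne
      -- f v < f z0 < f x = f u - 1, f u - f v = 2 so f v = f u - 2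
      omega
    have hwxv : 0 < w v x := by
      rw [hsym]
      by_contra hcon
      push_neg at hcon
      have : w x v = 0 := by omega
      rw [hz0v] at hz0pos
      rw [this] at hz0pos
      norm_num at hz0pos
    rcases hnbv x hwxv with h | h
    · exact absurd h hxu
    · subst h
      -- now y = x; hwvy : w v x = 1, hnbv : ∀ q, 0 < w v q → q = u ∨ q = x
      have hux : u ≠ x := Ne.symm hxu
      have hvx : v ≠ x := Ne.symm hxv
      have hall : ∀ z, z = u ∨ z = v ∨ z = x := by
        intro z
        by_cases hz : z = x
        · exact Or.inr (Or.inr hz)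
        · have hzm : z ∈ ({z' : V | z' = u ∨ z' = v} : Set V) := by
            refine closure_avoid w x (hbic.2 x) ?_ (Or.inl rfl) hux hz
            rintro a ha hax b hbx hadj
            obtain ⟨hne, hposb⟩ := adj_pos w hsym hadj
            rcases ha with rfl | rfl
            · rcases hnbu b hposb with rfl | rfl
              · exact Or.inr rfl
              · exact absurd rfl hbx
            · rcases hnbv b hposb with rfl | rfl
              · exact Or.inl rfl
              · exact absurd rfl hbx
          rcases hzm with h | h
          · exact Or.inl h
          · exact Or.inr (Or.inl h)
      refine ⟨u, v, x, huv, hvx, hux, hall, ?_⟩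
      intro s t hst
      have hkey : ∀ s' t' : V, s' ≠ t' → w s' t' = 1 ∨ w t' s' = 1 := by
        intro s' t' hst'
        rcases hall s' with rfl | rfl | rfl <;> rcases hall t' with rfl | rfl | rfl <;>
          first
            | exact absurd rfl hst'
            | exact Or.inl hwuv
            | exact Or.inl hwux
            | exact Or.inl hwvy
            | exact Or.inr hwuv
            | exact Or.inr hwux
            | exact Or.inr hwvy
      rcases hkey s t hst with h | h
      · exact h
      · rw [hsym]; exact h
end

section
/- Let D be a totally unimodular real m×n matrix with n ≥ 2 such that no index i is a loop (De_i ≠ 0 for every i), suppose that 2x ∈ B_I for every x ∈ B_I^#, and suppose the matroid of columns of D is connected in the sense that every pair of distinct column indices lies in a common circuit. Then n = 2, and the two columns of D satisfy De_1 = De_2 or De_1 = −De_2. -/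
/-!
Let `p` be the orthogonal projection of `eᵢ` onto the cut space `B`. For `b ∈ B_I` we have
`⟨p, b⟩ = bᵢ ∈ ℤ`, so `p ∈ B_I^#` and `u = 2p` is an integer vector; moreover `⟨p, p⟩ = pᵢ`, i.e.
`Σ uⱼ² = 2uᵢ`, so `‖u - eᵢ‖² = 1` and `u = eᵢ + ε eₖ` with `ε = ±1`. Since `i` is not a loop,
`u ≠ 0`, and since `i` lies in a circuit, `u ≠ 2eᵢ`; hence `k ≠ i`. Now `eᵢ - ε eₖ = 2(eᵢ - p) ∈ Z`
makes the columns `i` and `k` parallel, while `eᵢ + ε eₖ ∈ B` forces every circuit through `i` to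
contain `k`, hence to be `{i, k}`. Connectivity then leaves no room for a third index.
-/

open Matrix

variable {m n : ℕ}

/-- The cycle space `Z = ker D`. -/
def cycleSpace (D : Matrix (Fin m) (Fin n) ℝ) : Submodule ℝ (Fin n → ℝ) :=
  LinearMap.ker D.mulVecLin

/-- The cut space `B = Z^⊥`, the orthogonal complement of the cycle space with respect to the
standard inner product on `ℝⁿ`. -/
def cutSpace (D : Matrix (Fin m) (Fin n) ℝ) : Submodule ℝ (Fin n → ℝ) where
  carrier := {x | ∀ z ∈ cycleSpace D, x ⬝ᵥ z = 0}
  add_mem' := by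
    intro a b ha hb z hz
    simp [add_dotProduct, ha z hz, hb z hz]
  zero_mem' := by
    intro z hz
    simp
  smul_mem' := by
    intro c a ha z hz
    simp [smul_dotProduct, ha z hz]

/-- The cycle lattice `Z_I = Z ∩ ℤⁿ`. -/
def cycleLattice (D : Matrix (Fin m) (Fin n) ℝ) : Set (Fin n → ℝ) :=
  {x | x ∈ cycleSpace D ∧ ∀ i, ∃ k : ℤ, x i = (k : ℝ)}

/-- The cut lattice `B_I = B ∩ ℤⁿ`. -/
def cutLattice (D : Matrix (Fin m) (Fin n) ℝ) : Set (Fin n → ℝ) :=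
  {x | x ∈ cutSpace D ∧ ∀ i, ∃ k : ℤ, x i = (k : ℝ)}

/-- The dual lattice `B_I^# = {x ∈ B : ⟨x,b⟩ ∈ ℤ for all b ∈ B_I}`. -/
def dualLattice (D : Matrix (Fin m) (Fin n) ℝ) : Set (Fin n → ℝ) :=
  {x | x ∈ cutSpace D ∧ ∀ b ∈ cutLattice D, ∃ k : ℤ, x ⬝ᵥ b = (k : ℝ)}

/-- `P` is the orthogonal projection matrix onto the cut space `B`: `Px ∈ B` and
`x - Px ∈ B^⊥ = Z` for every `x`. -/
def IsCutProjection (D : Matrix (Fin m) (Fin n) ℝ) (P : Matrix (Fin n) (Fin n) ℝ) : Prop :=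
  ∀ x : Fin n → ℝ, P.mulVec x ∈ cutSpace D ∧ x - P.mulVec x ∈ cycleSpace D

/-- `S` is a circuit of the matroid of columns of `D`: the columns indexed by `S` are linearly
dependent, but those indexed by any proper subset are linearly independent. -/
def IsCircuit (D : Matrix (Fin m) (Fin n) ℝ) (S : Set (Fin n)) : Prop :=
  ¬ LinearIndependent ℝ (fun j : S => D.mulVec (Pi.single (j : Fin n) (1 : ℝ))) ∧
    ∀ T : Set (Fin n), T ⊂ S →
      LinearIndependent ℝ (fun j : T => D.mulVec (Pi.single (j : Fin n) (1 : ℝ)))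

section IntegerVectors

variable {ι : Type*} [Fintype ι] [DecidableEq ι]

lemma Int.exists_eq_single_of_sum_sq_eq_one {w : ι → ℤ} (h : ∑ j, w j ^ 2 = 1) :
    ∃ k ε, (ε = 1 ∨ ε = -1) ∧ w = Pi.single k ε := by
  obtain ⟨k, hk⟩ : ∃ k, w k ≠ 0 := by
    by_contra! hw
    simp [hw] at h
  have hk1 : 0 < w k ^ 2 := by positivity
  have hsplit := Finset.add_sum_erase Finset.univ (fun j => w j ^ 2) (Finset.mem_univ k)
  have hrest : ∑ j ∈ Finset.univ.erase k, w j ^ 2 = 0 :=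
    le_antisymm (by omega) (Finset.sum_nonneg fun j _ => sq_nonneg (w j))
  refine ⟨k, w k, sq_eq_one_iff.mp (by omega), funext fun j => ?_⟩
  by_cases hj : j = k
  · subst hj; simp
  · have := (Finset.sum_eq_zero_iff_of_nonneg fun j _ => sq_nonneg (w j)).mp hrest j
      (Finset.mem_erase.mpr ⟨hj, Finset.mem_univ j⟩)
    simpa [Pi.single_apply, hj] using this

lemma Int.exists_eq_single_add_smul_single {v : ι → ℤ} {i : ι} (h : ∑ j, v j ^ 2 = 2 * v i)
    (h0 : v ≠ 0) (h2 : v ≠ Pi.single i 2) :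
    ∃ k ≠ i, ∃ ε : ℤ, (ε = 1 ∨ ε = -1) ∧ v = Pi.single i 1 + ε • Pi.single k 1 := by
  have hw : ∑ j, (v j - (Pi.single i 1 : ι → ℤ) j) ^ 2 = 1 := by
    have : ∑ j, (v j - (Pi.single i 1 : ι → ℤ) j) ^ 2 = ∑ j, v j ^ 2 - 2 * v i + 1 := by
      simp only [sub_sq, Finset.sum_add_distrib, Finset.sum_sub_distrib]
      simp [Pi.single_apply]
    omega
  obtain ⟨k, ε, hε, hvk⟩ := Int.exists_eq_single_of_sum_sq_eq_one (w := v - Pi.single i 1) hw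
  rw [sub_eq_iff_eq_add'] at hvk
  have hsingle : Pi.single k ε = ε • (Pi.single k 1 : ι → ℤ) := by
    rw [← Pi.single_smul, smul_eq_mul, mul_one]
  refine ⟨k, ?_, ε, hε, hsingle ▸ hvk⟩
  rintro rfl
  rw [← Pi.single_add] at hvk
  rcases hε with rfl | rfl
  · exact h2 hvk
  · exact h0 (by simpa using hvk)

end IntegerVectors

section CycleSpace

variable {D : Matrix (Fin m) (Fin n) ℝ}

lemma mem_cycleSpace_iff {z : Fin n → ℝ} : z ∈ cycleSpace D ↔ D *ᵥ z = 0 := Iff.rfl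

lemma exists_mem_cutSpace_sub_mem_cycleSpace (x : Fin n → ℝ) :
    ∃ p ∈ cutSpace D, x - p ∈ cycleSpace D := by
  let K := (cycleSpace D).comap (WithLp.linearEquiv 2 ℝ (Fin n → ℝ)).toLinearMap
  obtain ⟨z, hz, p, hp, hx⟩ := K.exists_add_mem_mem_orthogonal (WithLp.toLp 2 x)
  refine ⟨p.ofLp, fun c hc => ?_, ?_⟩
  · have := (Submodule.mem_orthogonal' K p).mp hp (WithLp.toLp 2 c) hc
    simpa [EuclideanSpace.inner_eq_star_dotProduct, dotProduct_comm] using this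
  · have : x - p.ofLp = z.ofLp := by
      rw [← WithLp.ofLp_toLp 2 x, hx]
      simp
    rwa [this]

lemma mulVec_eq_sum_subtype {T : Set (Fin n)} [Fintype T] {z : Fin n → ℝ}
    (hz : ∀ k ∉ T, z k = 0) :
    D *ᵥ z = ∑ j : T, z j • D *ᵥ Pi.single (j : Fin n) 1 := by
  classical
  conv_lhs => rw [← Finset.univ_sum_single z]
  simp only [mulVec_sum, mulVec_single, op_smul_eq_smul, MulOpposite.op_one, one_smul]
  rw [Finset.sum_set_coe (f := fun j => z j • D.col j)]
  exact (Finset.sum_subset (Finset.subset_univ _) fun k _ hk => by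
    rw [hz k (by simpa using hk), zero_smul]).symm

lemma eq_zero_of_mem_cycleSpace_of_linearIndependent {T : Set (Fin n)}
    (hT : LinearIndependent ℝ fun j : T => D *ᵥ Pi.single (j : Fin n) (1 : ℝ))
    {z : Fin n → ℝ} (hz : z ∈ cycleSpace D) (hzT : ∀ k ∉ T, z k = 0) : z = 0 := by
  have := Fintype.ofFinite T
  have hcoeff := Fintype.linearIndependent_iff.mp hT (fun j => z j)
    ((mulVec_eq_sum_subtype hzT).symm.trans hz)
  funext k
  by_cases hk : k ∈ T
  · exact hcoeff ⟨k, hk⟩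
  · exact hzT k hk

lemma IsCircuit.exists_mem_cycleSpace {S : Set (Fin n)} (hS : IsCircuit D S) {i : Fin n}
    (hi : i ∈ S) : ∃ z ∈ cycleSpace D, (∀ k ∉ S, z k = 0) ∧ z i ≠ 0 := by
  classical
  have := Fintype.ofFinite S
  obtain ⟨g, hg, j, hj⟩ := Fintype.not_linearIndependent_iff.mp hS.1
  let z : Fin n → ℝ := fun k => if h : k ∈ S then g ⟨k, h⟩ else 0
  have hzS : ∀ k ∉ S, z k = 0 := fun k hk => dif_neg hk
  have hz : z ∈ cycleSpace D := by
    rw [mem_cycleSpace_iff, mulVec_eq_sum_subtype hzS]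
    simpa [z] using hg
  refine ⟨z, hz, hzS, fun hzi => hj ?_⟩
  have hz0 : z = 0 := by
    refine eq_zero_of_mem_cycleSpace_of_linearIndependent
      (hS.2 _ (Set.sdiff_singleton_ssubset.mpr hi)) hz fun k hk => ?_
    by_cases hki : k = i
    · rwa [hki]
    · exact hzS k fun hkS => hk ⟨hkS, hki⟩
  simpa [z] using congrFun hz0 j

lemma mem_dualLattice_of_sub_mem_cycleSpace {p : Fin n → ℝ} {i : Fin n} (hpB : p ∈ cutSpace D)
    (hpZ : Pi.single i 1 - p ∈ cycleSpace D) : p ∈ dualLattice D := by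
  refine ⟨hpB, fun b ⟨hbB, hbint⟩ => ?_⟩
  obtain ⟨k, hk⟩ := hbint i
  refine ⟨k, ?_⟩
  have := hbB _ hpZ
  rw [dotProduct_sub, dotProduct_single, mul_one] at this
  rw [dotProduct_comm]
  linarith

lemma dotProduct_self_eq_of_sub_mem_cycleSpace {p : Fin n → ℝ} {i : Fin n}
    (hpB : p ∈ cutSpace D) (hpZ : Pi.single i 1 - p ∈ cycleSpace D) : p ⬝ᵥ p = p i := by
  have := hpB _ hpZ
  rw [dotProduct_sub, dotProduct_single, mul_one] at this
  linarith

lemma exists_two_smul_eq_single_add_smul_single {p : Fin n → ℝ} {i : Fin n}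
    (hpB : p ∈ cutSpace D) (hpZ : Pi.single i 1 - p ∈ cycleSpace D)
    (hloop : D *ᵥ Pi.single i 1 ≠ 0) (hcoloop : ∃ z ∈ cycleSpace D, z i ≠ 0)
    (hexp : ∀ x ∈ dualLattice D, (2 : ℝ) • x ∈ cutLattice D) :
    ∃ k ≠ i, ∃ ε : ℝ, (ε = 1 ∨ ε = -1) ∧ (2 : ℝ) • p = Pi.single i 1 + ε • Pi.single k 1 := by
  have hp0 : p ≠ 0 := by
    rintro rfl
    exact hloop (mem_cycleSpace_iff.mp (by simpa using hpZ))
  have hp1 : p ≠ Pi.single i 1 := by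
    rintro rfl
    obtain ⟨z, hz, hzi⟩ := hcoloop
    exact hzi (by simpa using hpB z hz)
  choose u hu using (hexp p (mem_dualLattice_of_sub_mem_cycleSpace hpB hpZ)).2
  have hpu : (2 : ℝ) • p = fun j => (u j : ℝ) := funext hu
  have hsq : ∑ j, u j ^ 2 = 2 * u i := by
    have hpp := dotProduct_self_eq_of_sub_mem_cycleSpace hpB hpZ
    have : ∑ j, (u j : ℝ) ^ 2 = 2 * u i := by
      simp only [← hu, Pi.smul_apply, smul_eq_mul, mul_pow, ← Finset.mul_sum]
      simp only [dotProduct, ← sq] at hpp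
      rw [hpp]
      ring
    exact_mod_cast this
  have hu0 : u ≠ 0 := by
    rintro rfl
    exact hp0 (funext fun j => by simpa using congrFun hpu j)
  have hu2 : u ≠ Pi.single i 2 := by
    rintro rfl
    refine hp1 (smul_right_injective _ (two_ne_zero : (2 : ℝ) ≠ 0) ?_)
    simp only [hpu]
    funext j
    by_cases hj : j = i <;> simp [hj]
  obtain ⟨k, hki, ε, hε, rfl⟩ := Int.exists_eq_single_add_smul_single hsq hu0 hu2
  refine ⟨k, hki, ε, by exact_mod_cast hε, ?_⟩
  rw [hpu]
  funext j
  simp only [Pi.add_apply, Pi.smul_apply, Pi.single_apply, smul_eq_mul]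
  split_ifs <;> simp_all

lemma exists_parallel_element {i : Fin n} (hloop : D *ᵥ Pi.single i 1 ≠ 0)
    (hcoloop : ∃ z ∈ cycleSpace D, z i ≠ 0)
    (hexp : ∀ x ∈ dualLattice D, (2 : ℝ) • x ∈ cutLattice D) :
    ∃ k ≠ i, ∃ ε : ℝ, (ε = 1 ∨ ε = -1) ∧ Pi.single i 1 + ε • Pi.single k 1 ∈ cutSpace D ∧
      Pi.single i 1 - ε • Pi.single k 1 ∈ cycleSpace D := by
  obtain ⟨p, hpB, hpZ⟩ := exists_mem_cutSpace_sub_mem_cycleSpace (D := D) (Pi.single i 1)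
  obtain ⟨k, hki, ε, hε, hp⟩ :=
    exists_two_smul_eq_single_add_smul_single hpB hpZ hloop hcoloop hexp
  have hZ : Pi.single i 1 - ε • Pi.single k 1 = (2 : ℝ) • (Pi.single i 1 - p) := by
    rw [smul_sub, hp]
    module
  exact ⟨k, hki, ε, hε, hp ▸ Submodule.smul_mem _ 2 hpB, hZ ▸ Submodule.smul_mem _ 2 hpZ⟩

lemma IsCircuit.eq_pair {S : Set (Fin n)} (hS : IsCircuit D S) {i k : Fin n} {ε : ℝ}
    (hi : i ∈ S) (hki : k ≠ i) (hB : Pi.single i 1 + ε • Pi.single k 1 ∈ cutSpace D)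
    (hZ : Pi.single i 1 - ε • Pi.single k 1 ∈ cycleSpace D) : S = {i, k} := by
  obtain ⟨z, hz, hzS, hzi⟩ := hS.exists_mem_cycleSpace hi
  have hkS : k ∈ S := by
    by_contra hkS
    have := hB z hz
    simp [add_dotProduct, smul_dotProduct, hzS k hkS] at this
    exact hzi this
  by_contra hne
  have hsub : {i, k} ⊂ S :=
    (Set.insert_subset_iff.mpr ⟨hi, Set.singleton_subset_iff.mpr hkS⟩).ssubset_of_ne (Ne.symm hne)
  have := eq_zero_of_mem_cycleSpace_of_linearIndependent (hS.2 _ hsub) hZ fun l hl => by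
    simp at hl
    simp [hl]
  simpa [hki] using congrFun this i

lemma mulVec_single_eq_or_eq_neg {i k : Fin n} {ε : ℝ}
    (hε : ε = 1 ∨ ε = -1) (hZ : Pi.single i 1 - ε • Pi.single k 1 ∈ cycleSpace D) :
    D *ᵥ Pi.single i 1 = D *ᵥ Pi.single k 1 ∨ D *ᵥ Pi.single i 1 = -(D *ᵥ Pi.single k 1) := by
  rw [mem_cycleSpace_iff, mulVec_sub, mulVec_smul, sub_eq_zero] at hZ
  rcases hε with rfl | rfl
  · exact Or.inl (by simpa using hZ)
  · exact Or.inr (by simpa using hZ)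

end CycleSpace

theorem stmt10_general (m n : ℕ) (hn : 2 ≤ n) (D : Matrix (Fin m) (Fin n) ℝ)
    (hloop : ∀ i : Fin n, D.mulVec (Pi.single i (1 : ℝ)) ≠ 0)
    (hexp : ∀ x ∈ dualLattice D, (2 : ℝ) • x ∈ cutLattice D)
    (hconn : ∀ i j : Fin n, i ≠ j → ∃ S : Set (Fin n), IsCircuit D S ∧ i ∈ S ∧ j ∈ S) :
    n = 2 ∧ ∀ i j : Fin n, i ≠ j →
      (D.mulVec (Pi.single i (1 : ℝ)) = D.mulVec (Pi.single j (1 : ℝ)) ∨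
       D.mulVec (Pi.single i (1 : ℝ)) = -D.mulVec (Pi.single j (1 : ℝ))) := by
  have : Nontrivial (Fin n) := Fin.nontrivial_iff_two_le.mpr hn
  have hpartner : ∀ i : Fin n, ∃ k, (∀ j ≠ i, j = k) ∧
      (D *ᵥ Pi.single i 1 = D *ᵥ Pi.single k 1 ∨ D *ᵥ Pi.single i 1 = -(D *ᵥ Pi.single k 1)) := by
    intro i
    obtain ⟨j, hji⟩ := exists_ne i
    obtain ⟨S, hS, hiS, -⟩ := hconn i j hji.symm
    obtain ⟨z, hz, -, hzi⟩ := hS.exists_mem_cycleSpace hiS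
    obtain ⟨k, hki, ε, hε, hB, hZ⟩ := exists_parallel_element (hloop i) ⟨z, hz, hzi⟩ hexp
    refine ⟨k, fun j hji => ?_, mulVec_single_eq_or_eq_neg hε hZ⟩
    obtain ⟨S, hS, hiS, hjS⟩ := hconn i j hji.symm
    rw [hS.eq_pair hiS hki hB hZ] at hjS
    exact hjS.resolve_left hji
  refine ⟨?_, fun i j hij => ?_⟩
  · obtain ⟨i₀⟩ := (inferInstance : Nonempty (Fin n))
    obtain ⟨k, hk, -⟩ := hpartner i₀
    have hsub : (Finset.univ : Finset (Fin n)) ⊆ {i₀, k} := fun j _ => by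
      by_cases hj : j = i₀
      · simp [hj]
      · simp [hk j hj]
    have : n ≤ 2 := by simpa using (Finset.card_le_card hsub).trans Finset.card_le_two
    omega
  · obtain ⟨k, hk, hcol⟩ := hpartner i
    rwa [hk j hij.symm]

/-- if `D` is totally unimodular with `n ≥ 2` columns, no loops, `2x ∈ B_I` for
all `x ∈ B_I^#`, and every two distinct column indices lie in a common circuit, then `n = 2`
and the two columns agree up to sign. -/
theorem stmt10 (m n : ℕ) (hn : 2 ≤ n) (D : Matrix (Fin m) (Fin n) ℝ)
    (hTU : D.IsTotallyUnimodular)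
    (hloop : ∀ i : Fin n, D.mulVec (Pi.single i (1 : ℝ)) ≠ 0)
    (hexp : ∀ x ∈ dualLattice D, (2 : ℝ) • x ∈ cutLattice D)
    (hconn : ∀ i j : Fin n, i ≠ j → ∃ S : Set (Fin n), IsCircuit D S ∧ i ∈ S ∧ j ∈ S) :
    n = 2 ∧ ∀ i j : Fin n, i ≠ j →
      (D.mulVec (Pi.single i (1 : ℝ)) = D.mulVec (Pi.single j (1 : ℝ)) ∨
       D.mulVec (Pi.single i (1 : ℝ)) = -D.mulVec (Pi.single j (1 : ℝ))) :=
  stmt10_general m n hn D hloop hexp hconn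
end
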